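/- arXiv:1106.1255 — 3 statements merged into one kernel-verified Lean document; each statement's English description precedes it below -/
import Mathlib

section
/- The Kronecker product G₁ × G₂ of two nontrivial graphs is connected if and only if both G₁ and G₂ are connected and at least one of them is non-bipartite. -/
open SimpleGraph

universe u v

/-- Kronecker (direct / tensor) product of two simple graphs. -/
def SimpleGraph.tensor {V : Type u} {W : Type v} (G : SimpleGraph V) (H : SimpleGraph W) :
    SimpleGraph (V × W) where
  Adj p q := G.Adj p.1 q.1 ∧ H.Adj p.2 q.2
  symm := ⟨fun _ _ h => ⟨h.1.symm, h.2.symm⟩⟩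
  loopless := ⟨fun _ h => G.loopless.irrefl _ h.1⟩

/-- `G × K₂`, realized on `V × Bool` (where `false` plays the role of `a` and `true` of `b`):
`(u,x)` is adjacent to `(v,y)` iff `uv ∈ E(G)` and `x ≠ y`. -/
def timesK2 {V : Type u} (G : SimpleGraph V) : SimpleGraph (V × Bool) :=
  G.tensor ⊤

/-- `C` is (the vertex set of) a connected component of the graph `H`. -/
def IsComp {α : Type u} (H : SimpleGraph α) (C : Set α) : Prop :=
  ∃ K : H.ConnectedComponent, C = K.supp

/-- `C ⊆ V` is (the vertex set of) a connected component of the induced subgraph `G[s]`. -/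
def IsCompOf {V : Type u} (G : SimpleGraph V) (s C : Set V) : Prop :=
  ∃ K : (G.induce s).ConnectedComponent, C = Subtype.val '' K.supp

/-- `(X, Y)` is a b-pair of `G`: `X` and `Y` are disjoint, `V(G) - (X ∪ Y)` is nonempty,
`G - (X ∪ Y)` has a bipartite component `C`, and `G[V(C) ∪ {x}]` is bipartite
for each `x ∈ X`.  (Bipartite = 2-colorable.) -/
def IsBPair {V : Type u} (G : SimpleGraph V) (X Y : Set V) : Prop :=
  Disjoint X Y ∧ ((X ∪ Y)ᶜ : Set V).Nonempty ∧
    ∃ C : Set V, IsCompOf G ((X ∪ Y)ᶜ) C ∧ (G.induce C).Colorable 2 ∧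
      ∀ x ∈ X, (G.induce (C ∪ {x})).Colorable 2

/-- `b(G) = min{|X| + 2|Y| : (X,Y) is a b-pair of G}`. -/
noncomputable def bInv {V : Type u} (G : SimpleGraph V) : ℕ :=
  sInf {n | ∃ X Y : Set V, IsBPair G X Y ∧ n = X.ncard + 2 * Y.ncard}

/-- `S` is a separating set of `G`: removing `S` leaves a disconnected graph,
or a graph with at most one vertex. -/
def IsSeparating {V : Type u} (G : SimpleGraph V) (S : Set V) : Prop :=
  ¬ (G.induce Sᶜ).Connected ∨ (Sᶜ : Set V).Subsingleton

/-- The vertex connectivity `κ(G)`: the fewest number of vertices whose removal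
disconnects `G` or leaves at most a single vertex. -/
noncomputable def kappa {V : Type u} (G : SimpleGraph V) : ℕ :=
  sInf {n | ∃ S : Set V, IsSeparating G S ∧ n = S.ncard}

/-- The quotient-like graph `G*` whose vertices are the nonempty classes
`S'_u = ({u} × {a,b}) − S` (indexed by `u ∈ V(G)`), with `S'_u ~ S'_v` iff
`G × K₂ − S` has an edge with one end in `S'_u` and the other in `S'_v`. -/
def starGraph {V : Type u} (G : SimpleGraph V) (S : Set (V × Bool)) : SimpleGraph V where
  Adj u v := u ≠ v ∧ ∃ x y : Bool, (u, x) ∉ S ∧ (v, y) ∉ S ∧ (timesK2 G).Adj (u, x) (v, y)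
  symm := by
    constructor
    rintro u v ⟨h, x, y, hx, hy, hadj⟩
    exact ⟨h.symm, y, x, hy, hx, hadj.symm⟩
  loopless := ⟨fun u h => h.1 rfl⟩


/-!
Walks in `G × H` are exactly pairs of walks of equal length in `G` and `H`. If both factors are
bipartite, every walk from `(u, w)` to `(u', w)` with `u ~ u'` projects to a closed walk of even
length in `H` and hence, after closing it with the edge `u'u`, to a closed walk of odd length in
`G`, which cannot exist. Conversely, in a connected non-bipartite `G` any two vertices are joined
by walks of both parities, and in a connected nontrivial graph a walk can be lengthened by any
even number (go back and forth along an edge); so walks of equal length exist in both factors.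
-/

namespace SimpleGraph

variable {V : Type u} {W : Type v} {G : SimpleGraph V} {H : SimpleGraph W}

def tensorFst (G : SimpleGraph V) (H : SimpleGraph W) : G.tensor H →g G :=
  ⟨Prod.fst, And.left⟩

def tensorSnd (G : SimpleGraph V) (H : SimpleGraph W) : G.tensor H →g H :=
  ⟨Prod.snd, And.right⟩

def tensorComm (G : SimpleGraph V) (H : SimpleGraph W) : G.tensor H ≃g H.tensor G :=
  ⟨Equiv.prodComm V W, and_comm⟩

lemma Walk.exists_length_eq_add_two_mul {u v x : V} (hx : G.Adj u x) (p : G.Walk u v) (m : ℕ) :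
    ∃ q : G.Walk u v, q.length = p.length + 2 * m := by
  induction m with
  | zero => exact ⟨p, rfl⟩
  | succ m ih =>
    obtain ⟨q, hq⟩ := ih
    exact ⟨.cons hx (.cons hx.symm q), by simp only [Walk.length_cons, hq]; ring⟩

lemma Preconnected.exists_walk_length_mod_two (hG : G.Preconnected) (hG2 : ¬ G.Colorable 2)
    (u v : V) (n : ℕ) : ∃ p : G.Walk u v, p.length % 2 = n % 2 := by
  obtain ⟨x, c, hc⟩ : ∃ x, ∃ c : G.Walk x x, Odd c.length := by
    simpa [two_colorable_iff_forall_loop_even] using hG2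
  obtain ⟨p⟩ := hG u v
  obtain ⟨a⟩ := hG u x
  by_cases hp : p.length % 2 = n % 2
  · exact ⟨p, hp⟩
  · refine ⟨(a.append (c.append a.reverse)).append p, ?_⟩
    simp only [Walk.length_append, Walk.length_reverse]
    rw [Nat.odd_iff] at hc
    omega

lemma reachable_tensor_of_length_eq {a b : V} {c d : W} (p : G.Walk a b) (q : H.Walk c d)
    (h : p.length = q.length) : (G.tensor H).Reachable (a, c) (b, d) := by
  induction p generalizing c with
  | nil =>
    cases q with
    | nil => rfl
    | cons _ _ => simp at h
  | cons hp p ih =>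
    cases q with
    | nil => simp at h
    | cons hq q =>
      exact Adj.reachable (G := G.tensor H) ⟨hp, hq⟩ |>.trans (ih q (by simpa using h))

lemma Preconnected.tensor [Nontrivial V] [Nontrivial W] (hG : G.Preconnected)
    (hH : H.Preconnected) (hG2 : ¬ G.Colorable 2) : (G.tensor H).Preconnected := by
  rintro ⟨u, w⟩ ⟨u', w'⟩
  obtain ⟨q⟩ := hH w w'
  obtain ⟨p, hp⟩ := hG.exists_walk_length_mod_two hG2 u u' q.length
  obtain ⟨x, hx⟩ := hG.exists_adj_of_nontrivial u
  obtain ⟨y, hy⟩ := hH.exists_adj_of_nontrivial w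
  rcases le_total p.length q.length with hle | hle
  · obtain ⟨p', hp'⟩ := p.exists_length_eq_add_two_mul hx ((q.length - p.length) / 2)
    exact reachable_tensor_of_length_eq p' q (by omega)
  · obtain ⟨q', hq'⟩ := q.exists_length_eq_add_two_mul hy ((p.length - q.length) / 2)
    exact reachable_tensor_of_length_eq p q' (by omega)

lemma not_colorable_two_of_preconnected_tensor (hT : (G.tensor H).Preconnected) {u u' : V}
    (hu : G.Adj u u') (w : W) (hH2 : H.Colorable 2) : ¬ G.Colorable 2 := by
  intro hG2
  rw [two_colorable_iff_forall_loop_even] at hG2 hH2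
  obtain ⟨P⟩ := hT (u, w) (u', w)
  have hP : Even P.length := Walk.length_map _ P ▸ hH2 _ (P.map (tensorSnd G H))
  have hP' : Even (P.length + 1) :=
    Walk.length_map _ P ▸ Walk.length_concat _ _ ▸ hG2 _ ((P.map (tensorFst G H)).concat hu.symm)
  exact Nat.not_even_iff_odd.2 hP.add_one hP'

end SimpleGraph

theorem stmt_5_general {V : Type u} {W : Type v}
    [Nontrivial V] [Nontrivial W] (G : SimpleGraph V) (H : SimpleGraph W) :
    (G.tensor H).Connected ↔
      G.Connected ∧ H.Connected ∧ (¬ G.Colorable 2 ∨ ¬ H.Colorable 2) := by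
  constructor
  · intro hT
    have hG : G.Connected := hT.map (tensorFst G H) Prod.fst_surjective
    have hH : H.Connected := hT.map (tensorSnd G H) Prod.snd_surjective
    obtain ⟨u⟩ : Nonempty V := inferInstance
    obtain ⟨w⟩ : Nonempty W := inferInstance
    obtain ⟨u', hu⟩ := hG.preconnected.exists_adj_of_nontrivial u
    refine ⟨hG, hH, or_iff_not_imp_right.2 fun hH2 => ?_⟩
    exact not_colorable_two_of_preconnected_tensor hT.preconnected hu w (not_not.1 hH2)
  · rintro ⟨hG, hH, hG2 | hH2⟩
    · exact ⟨hG.preconnected.tensor hH.preconnected hG2⟩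
    · exact (tensorComm H G).connected_iff.1 ⟨hH.preconnected.tensor hG.preconnected hH2⟩

/-- The Kronecker product of two nontrivial graphs is connected iff both factors are
connected and at least one of them is non-bipartite. -/
theorem stmt_5 {V : Type u} {W : Type v} [Fintype V] [Fintype W]
    [Nontrivial V] [Nontrivial W] (G : SimpleGraph V) (H : SimpleGraph W) :
    (G.tensor H).Connected ↔
      G.Connected ∧ H.Connected ∧ (¬ G.Colorable 2 ∨ ¬ H.Colorable 2) :=
  stmt_5_general G H
end

section
/- For every graph G, κ(G × K₂) = min{2κ(G), b(G)}. -/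
/-!
A separating set `T` of `G` gives the separating set `T × {a, b}` of `G × K₂`. A b-pair `(X, Y)`
with bipartite component `C`, 2-coloured by `c`, gives one of size at most `|X| + 2|Y|`: delete
both copies of every `y ∈ Y` and, for `x ∈ X`, the copy of `x` adjacent to the side
`{(v, c v) : v ∈ C}`. That copy is unique because `G[C ∪ {x}]` is bipartite and `C` is connected,
and afterwards the side `{(v, c v)}` is cut off from its mirror image `{(v, ¬c v)}`.

Conversely, let `S` separate `G × K₂` and split `V(G)` into the vertices `W` with both copies
outside `S`, `A` with exactly one and `B` with none, so that `|A| + 2|B| ≤ |S|`.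
If some `w ∈ W` has its two copies in different components of `G × K₂ - S`, then the component of
`w` in `G - (A ∪ B)` is bipartite (colour `v` by which copy lies in the component of `(w, a)`),
and `(A, B)` is a b-pair. Otherwise, if the copies of two vertices of `W` lie in different
components, let `P` be the projection of one of them: both `B ∪ (A ∩ P)` and `B ∪ (A \ P)`
separate `G`, and their sizes add up to `|A| + 2|B|`. Otherwise some component contains no copy
of a vertex of `W`; it contains the surviving copy of some `x ∈ A` without neighbours in `W`, and
`(A \ {x}, B)` is a b-pair with component `{x}`.
-/

open SimpleGraph

universe u v

namespace SimpleGraph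

variable {α : Type*} {G : SimpleGraph α} {s : Set α}

lemma spanningCoe_induce_adj {a b : α} :
    (G.induce s).spanningCoe.Adj a b ↔ G.Adj a b ∧ a ∈ s ∧ b ∈ s := by
  constructor
  · rintro ⟨-, a, b, h, rfl, rfl⟩
    exact ⟨h, a.2, b.2⟩
  · rintro ⟨h, ha, hb⟩
    exact ⟨h.ne, ⟨a, ha⟩, ⟨b, hb⟩, h, rfl, rfl⟩

lemma spanningCoe_induce_mono {t : Set α} (h : s ⊆ t) :
    (G.induce s).spanningCoe ≤ (G.induce t).spanningCoe := fun _ _ hab => by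
  obtain ⟨hab, ha, hb⟩ := spanningCoe_induce_adj.mp hab
  exact spanningCoe_induce_adj.mpr ⟨hab, h ha, h hb⟩

lemma Adj.reachable_iff {e a b : α} (h : G.Adj a b) : G.Reachable e a ↔ G.Reachable e b :=
  ⟨fun h' => h'.trans h.reachable, fun h' => h'.trans h.reachable.symm⟩

lemma Reachable.mem_of_adj_closed {U : Set α} (hU : ∀ a b, G.Adj a b → a ∈ U → b ∈ U)
    {x y : α} (h : G.Reachable x y) (hx : x ∈ U) : y ∈ U := by
  obtain ⟨w⟩ := h
  induction w with
  | nil => exact hx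
  | cons hab _ ih => exact ih (hU _ _ hab hx)

lemma Reachable.mem_of_spanningCoe_induce {x y : α}
    (h : (G.induce s).spanningCoe.Reachable x y) (hx : x ∈ s) : y ∈ s :=
  h.mem_of_adj_closed (fun _ _ hab _ => (spanningCoe_induce_adj.mp hab).2.2) hx

lemma reachable_induce_iff {x y : s} :
    (G.induce s).Reachable x y ↔ (G.induce s).spanningCoe.Reachable x y := by
  refine ⟨fun h => h.map (Embedding.spanningCoe _).toHom, fun h => ?_⟩
  obtain ⟨hy, hxy⟩ : ∃ hy : y.1 ∈ s, (G.induce s).Reachable x ⟨y, hy⟩ := by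
    refine h.mem_of_adj_closed (U := {b | ∃ hb : b ∈ s, (G.induce s).Reachable x ⟨b, hb⟩})
      (fun a b hab ⟨_, hxa⟩ => ?_) ⟨x.2, .rfl⟩
    obtain ⟨hab, ha, hb⟩ := spanningCoe_induce_adj.mp hab
    exact ⟨hb, hxa.trans
      (Adj.reachable (G := G.induce s) (u := ⟨a, ha⟩) (v := ⟨b, hb⟩) hab)⟩
  exact hxy

lemma connected_induce_iff_reachable :
    (G.induce s).Connected ↔
      s.Nonempty ∧ ∀ x ∈ s, ∀ y ∈ s, (G.induce s).spanningCoe.Reachable x y := by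
  rw [connected_iff, Set.nonempty_coe_sort]
  refine and_comm.trans (and_congr_right fun _ => ?_)
  exact ⟨fun h x hx y hy => reachable_induce_iff.mp (h ⟨x, hx⟩ ⟨y, hy⟩),
    fun h x y => reachable_induce_iff.mpr (h x x.2 y y.2)⟩

lemma image_supp_connectedComponentMk (x : s) :
    Subtype.val '' ((G.induce s).connectedComponentMk x).supp =
      {y | (G.induce s).spanningCoe.Reachable x y} := by
  ext y
  constructor
  · rintro ⟨y, hy, rfl⟩
    rw [ConnectedComponent.mem_supp_iff, ConnectedComponent.eq] at hy
    exact (reachable_induce_iff.mp hy).symm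
  · intro h
    have hy := h.mem_of_spanningCoe_induce x.2
    refine ⟨⟨y, hy⟩, ?_, rfl⟩
    rw [ConnectedComponent.mem_supp_iff, ConnectedComponent.eq]
    exact ((reachable_induce_iff (y := ⟨y, hy⟩)).mpr h).symm

lemma Reachable.spanningCoe_induce_setOf_reachable {x y : α}
    (h : (G.induce s).spanningCoe.Reachable x y) :
    (G.induce {z | (G.induce s).spanningCoe.Reachable x z}).spanningCoe.Reachable x y := by
  refine h.mem_of_adj_closed (U := {z | (G.induce _).spanningCoe.Reachable x z})
    (fun a b hab ha => ?_) .rfl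
  have haC : a ∈ {z | (G.induce s).spanningCoe.Reachable x z} :=
    ha.mem_of_spanningCoe_induce (Reachable.refl x)
  exact ha.trans (spanningCoe_induce_adj.mpr ⟨(spanningCoe_induce_adj.mp hab).1, haC,
    haC.trans hab.reachable⟩).reachable

lemma Coloring.eq_iff_eq_of_reachable (c d : G.Coloring Bool) {u v : α} (h : G.Reachable u v) :
    c u = c v ↔ d u = d v := by
  obtain ⟨p⟩ := h
  have hc := c.even_length_iff_congr p
  have hd := d.even_length_iff_congr p
  simp only [← Bool.eq_iff_iff] at hc hd
  rw [← hc, hd]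

lemma colorable_two_induce_iff :
    (G.induce s).Colorable 2 ↔ Nonempty ((G.induce s).spanningCoe.Coloring Bool) :=
  ⟨fun h => ⟨recolorOfEquiv _ finTwoEquiv (h.map (Function.Embedding.subtype _)).some⟩,
    fun ⟨c⟩ => Colorable.of_hom (Embedding.spanningCoe _).toHom
      ⟨recolorOfEquiv _ finTwoEquiv.symm c⟩⟩

lemma colorable_two_induce_pair (a b : α) : (G.induce {a, b}).Colorable 2 := by
  classical
  refine colorable_two_induce_iff.mpr ⟨Coloring.mk (fun z => decide (z = b)) fun {z w} h => ?_⟩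
  obtain ⟨h, hz, hw⟩ := spanningCoe_induce_adj.mp h
  have := h.ne
  simp only [Set.mem_insert_iff, Set.mem_singleton_iff] at hz hw
  rcases hz with rfl | rfl <;> rcases hw with rfl | rfl <;> simp_all [eq_comm]

end SimpleGraph

section
variable {α : Type*} {G : SimpleGraph α}

lemma isCompOf_iff {s C : Set α} :
    IsCompOf G s C ↔ ∃ x ∈ s, C = {y | (G.induce s).spanningCoe.Reachable x y} := by
  constructor
  · rintro ⟨K, rfl⟩
    induction K using ConnectedComponent.ind with | h x => ?_
    exact ⟨x, x.2, image_supp_connectedComponentMk x⟩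
  · rintro ⟨x, hx, rfl⟩
    exact ⟨_, (image_supp_connectedComponentMk ⟨x, hx⟩).symm⟩

lemma isSeparating_iff {S : Set α} :
    IsSeparating G S ↔
      Sᶜ.Subsingleton ∨
        ∃ x ∉ S, ∃ y ∉ S, ¬ (G.induce Sᶜ).spanningCoe.Reachable x y := by
  rw [IsSeparating, connected_induce_iff_reachable]
  constructor
  · rintro (h | h)
    · by_cases hne : Sᶜ.Nonempty
      · push Not at h
        exact .inr (h hne)
      · rw [Set.not_nonempty_iff_eq_empty.mp hne]
        exact .inl Set.subsingleton_empty
    · exact .inl h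
  · rintro (h | ⟨x, hx, y, hy, h⟩)
    · exact .inr h
    · exact .inl fun hc => h (hc.2 x hx y hy)

lemma isSeparating_of_adj_closed {S U : Set α}
    (hU : ∀ a b, a ∉ S → b ∉ S → G.Adj a b → a ∈ U → b ∈ U)
    {x y : α} (hxS : x ∉ S) (hyS : y ∉ S) (hx : x ∈ U) (hy : y ∉ U) :
    IsSeparating G S := by
  refine isSeparating_iff.mpr (.inr ⟨x, hxS, y, hyS, fun h => hy ?_⟩)
  refine h.mem_of_adj_closed (fun a b hab ha => ?_) hx
  obtain ⟨hab, haS, hbS⟩ := spanningCoe_induce_adj.mp hab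
  exact hU a b haS hbS hab ha

lemma isSeparating_univ (G : SimpleGraph α) : IsSeparating G Set.univ :=
  .inr (by simp)

lemma kappa_le {S : Set α} (h : IsSeparating G S) : kappa G ≤ S.ncard :=
  Nat.sInf_le ⟨S, h, rfl⟩

lemma exists_isSeparating_ncard_eq_kappa (G : SimpleGraph α) :
    ∃ S, IsSeparating G S ∧ kappa G = S.ncard :=
  Nat.sInf_mem (s := {n | ∃ S, IsSeparating G S ∧ n = S.ncard})
    ⟨_, _, isSeparating_univ G, rfl⟩

lemma le_kappa {m : ℕ} (h : ∀ S, IsSeparating G S → m ≤ S.ncard) : m ≤ kappa G := by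
  obtain ⟨S, hS, hκ⟩ := exists_isSeparating_ncard_eq_kappa G
  exact hκ ▸ h S hS

lemma bInv_le {X Y : Set α} (h : IsBPair G X Y) : bInv G ≤ X.ncard + 2 * Y.ncard :=
  Nat.sInf_le ⟨X, Y, h, rfl⟩

lemma isBPair_of_forall_not_adj {X Y : Set α} {v : α} (hXY : Disjoint X Y) (hv : v ∉ X ∪ Y)
    (hiso : ∀ w ∉ X ∪ Y, ¬ G.Adj v w) : IsBPair G X Y := by
  refine ⟨hXY, ⟨v, hv⟩, {v}, isCompOf_iff.mpr ⟨v, hv, ?_⟩, ?_, fun x _ => ?_⟩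
  · refine Set.Subset.antisymm (fun y hy => ?_) fun y hy => ?_
    · rw [Set.mem_singleton_iff.mp hy]
      exact .rfl
    refine hy.mem_of_adj_closed (fun a b hab ha => ?_) rfl
    obtain ⟨hab, -, hb⟩ := spanningCoe_induce_adj.mp hab
    exact absurd (Set.mem_singleton_iff.mp ha ▸ hab) (hiso b hb)
  · exact Set.pair_eq_singleton v ▸ colorable_two_induce_pair v v
  · rw [Set.union_singleton]
    exact colorable_two_induce_pair x v

lemma isBPair_compl_singleton (v : α) : IsBPair G {v}ᶜ ∅ :=
  isBPair_of_forall_not_adj (v := v) (Set.disjoint_empty _) (by simp) fun w hw => by simp_all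

lemma exists_isBPair_ncard_eq_bInv [Nonempty α] (G : SimpleGraph α) :
    ∃ X Y, IsBPair G X Y ∧ bInv G = X.ncard + 2 * Y.ncard := by
  obtain ⟨v⟩ := ‹Nonempty α›
  exact Nat.sInf_mem (s := {n | ∃ X Y, IsBPair G X Y ∧ n = X.ncard + 2 * Y.ncard})
    ⟨_, {v}ᶜ, ∅, isBPair_compl_singleton v, rfl⟩

end
section
variable {V : Type*} {G : SimpleGraph V}

lemma timesK2_adj {p q : V × Bool} : (timesK2 G).Adj p q ↔ G.Adj p.1 q.1 ∧ p.2 ≠ q.2 :=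
  Iff.rfl

lemma ncard_prod_univ_bool (T : Set V) : (T ×ˢ (Set.univ : Set Bool)).ncard = 2 * T.ncard := by
  rw [Set.ncard_prod, Set.ncard_univ, Nat.card_eq_fintype_card, Fintype.card_bool, mul_comm]

lemma IsSeparating.prod_univ {T : Set V} (hT : IsSeparating G T) :
    IsSeparating (timesK2 G) (T ×ˢ Set.univ) := by
  rcases isSeparating_iff.mp hT with hsub | ⟨x, hx, y, hy, hxy⟩
  · obtain ⟨u, hu⟩ | hempty := Tᶜ.eq_empty_or_nonempty.symm
    · refine isSeparating_of_adj_closed (U := {p | p.2 = false}) (x := (u, false)) (y := (u, true))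
        (fun a b ha hb hab _ => ?_) (by simpa) (by simpa) rfl (by simp)
      simp only [Set.mem_prod, Set.mem_univ, and_true] at ha hb
      exact absurd (hsub ha hb) (timesK2_adj.mp hab).1.ne
    · rw [Set.compl_empty_iff.mp hempty, Set.univ_prod_univ]
      exact isSeparating_univ _
  · refine isSeparating_of_adj_closed (U := {p | (G.induce Tᶜ).spanningCoe.Reachable x p.1})
      (x := (x, false)) (y := (y, false)) (fun a b ha hb hab hxa => ?_) (by simpa) (by simpa)
      .rfl hxy
    simp only [Set.mem_prod, Set.mem_univ, and_true] at ha hb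
    exact hxa.trans (spanningCoe_induce_adj.mpr ⟨(timesK2_adj.mp hab).1, ha, hb⟩).reachable

lemma IsBPair.exists_isSeparating_timesK2 [Finite V] {X Y : Set V} (h : IsBPair G X Y) :
    ∃ S, IsSeparating (timesK2 G) S ∧ S.ncard ≤ X.ncard + 2 * Y.ncard := by
  obtain ⟨-, -, C, hC, hcolC, hcolX⟩ := h
  obtain ⟨v₀, hv₀, rfl⟩ := isCompOf_iff.mp hC
  set C := {y | (G.induce (X ∪ Y)ᶜ).spanningCoe.Reachable v₀ y}
  obtain ⟨c⟩ := colorable_two_induce_iff.mp hcolC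
  -- Because `G[C ∪ {x}]` is bipartite and `C` is connected.
  have key : ∀ x ∈ X, ∀ v ∈ C, ∀ v' ∈ C, G.Adj x v → G.Adj x v' → c v = c v' := by
    intro x hx v hv v' hv' hxv hxv'
    obtain ⟨d⟩ := colorable_two_induce_iff.mp (hcolX x hx)
    have hd : ∀ w ∈ C, G.Adj x w → d w = !d x := fun w hw hxw =>
      Bool.eq_not.mpr (d.valid (spanningCoe_induce_adj.mpr ⟨hxw.symm, .inl hw, .inr rfl⟩))
    have hvv' : (G.induce C).spanningCoe.Reachable v v' :=
      (Reachable.spanningCoe_induce_setOf_reachable hv).symm.trans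
        (Reachable.spanningCoe_induce_setOf_reachable hv')
    rw [Coloring.eq_iff_eq_of_reachable c (d.comap (Hom.ofLE (spanningCoe_induce_mono
      Set.subset_union_left))) hvv']
    exact (hd v hv hxv).trans (hd v' hv' hxv').symm
  set Z : Set (V × Bool) := {p | p.1 ∈ X ∧ ∃ v ∈ C, G.Adj p.1 v ∧ p.2 = !c v}
  refine ⟨Y ×ˢ Set.univ ∪ Z, ?_, ?_⟩
  · have hv₀S : ∀ t, (v₀, t) ∉ Y ×ˢ Set.univ ∪ Z := fun t h => by
      rcases h with ⟨h, -⟩ | ⟨h, -⟩ <;> simp_all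
    refine isSeparating_of_adj_closed (U := {p | p.1 ∈ C ∧ p.2 = c p.1}) (x := (v₀, c v₀))
      (y := (v₀, !c v₀)) (fun a b ha hb hab ⟨haC, hac⟩ => ?_) (hv₀S _) (hv₀S _)
      ⟨.rfl, rfl⟩ (by simp)
    obtain ⟨hab, hne⟩ := timesK2_adj.mp hab
    have hbt : b.2 = !c a.1 := Bool.eq_not.mpr (hac ▸ hne.symm)
    have hbY : b.1 ∉ Y := fun h => hb (.inl ⟨h, trivial⟩)
    have hbX : b.1 ∉ X := fun h => hb (.inr ⟨h, a.1, haC, hab.symm, hbt⟩)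
    have hbC : b.1 ∈ C := haC.trans (spanningCoe_induce_adj.mpr
      ⟨hab, haC.mem_of_spanningCoe_induce hv₀, by simp [hbX, hbY]⟩).reachable
    have hbc : c b.1 = !c a.1 :=
      Bool.eq_not.mpr (c.valid (spanningCoe_induce_adj.mpr ⟨hab, haC, hbC⟩)).symm
    exact ⟨hbC, hbt.trans hbc.symm⟩
  · calc (Y ×ˢ Set.univ ∪ Z).ncard
        ≤ (Y ×ˢ Set.univ).ncard + Z.ncard := Set.ncard_union_le _ _
      _ ≤ 2 * Y.ncard + X.ncard := by
        rw [ncard_prod_univ_bool]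
        refine Nat.add_le_add_left (Set.ncard_le_ncard_of_injOn Prod.fst (fun p hp => hp.1) ?_) _
        rintro ⟨x, t⟩ ⟨hx, v, hv, hxv, rfl⟩ ⟨x', t'⟩ ⟨-, v', hv', hxv', rfl⟩
          (rfl : x = x')
        rw [key x hx v hv v' hv' hxv hxv']
      _ = X.ncard + 2 * Y.ncard := add_comm _ _


end

section
variable {V : Type*} {G : SimpleGraph V} {S : Set (V × Bool)}

def intactVerts (S : Set (V × Bool)) : Set V := {v | ∀ t, (v, t) ∉ S}

def deletedVerts (S : Set (V × Bool)) : Set V := {v | ∀ t, (v, t) ∈ S}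

def halfDeletedVerts (S : Set (V × Bool)) : Set V := (intactVerts S ∪ deletedVerts S)ᶜ

lemma mem_halfDeletedVerts {x : V} :
    x ∈ halfDeletedVerts S ↔ ∃ t, (x, t) ∉ S ∧ (x, !t) ∈ S := by
  simp only [halfDeletedVerts, intactVerts, deletedVerts, Set.mem_compl_iff, Set.mem_union,
    Set.mem_ofPred_eq, Bool.forall_bool, Bool.exists_bool, Bool.not_false, Bool.not_true]
  tauto

lemma exists_not_mem_of_not_mem_deletedVerts {v : V} (hv : v ∉ deletedVerts S) :
    ∃ t, (v, t) ∉ S :=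
  not_forall.mp hv

lemma mem_intactVerts_or_halfDeletedVerts_or_deletedVerts (v : V) :
    v ∈ intactVerts S ∨ v ∈ halfDeletedVerts S ∨ v ∈ deletedVerts S := by
  simp only [halfDeletedVerts, Set.mem_compl_iff, Set.mem_union]
  tauto

lemma not_mem_deletedVerts_of_mem_intactVerts {v : V} (hv : v ∈ intactVerts S) :
    v ∉ deletedVerts S :=
  fun h => hv false (h false)

lemma compl_halfDeletedVerts_union_deletedVerts :
    (halfDeletedVerts S ∪ deletedVerts S)ᶜ = intactVerts S := by
  ext v
  have := not_mem_deletedVerts_of_mem_intactVerts (S := S) (v := v)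
  simp only [halfDeletedVerts, Set.mem_compl_iff, Set.mem_union]
  tauto

lemma disjoint_halfDeletedVerts_deletedVerts :
    Disjoint (halfDeletedVerts S) (deletedVerts S) :=
  Set.disjoint_left.mpr fun _ hA hB => hA (.inr hB)

lemma ncard_halfDeletedVerts_add_le [Finite V] :
    (halfDeletedVerts S).ncard + 2 * (deletedVerts S).ncard ≤ S.ncard := by
  have hB : deletedVerts S ×ˢ Set.univ ⊆ S := fun p hp => hp.1 p.2
  have hA : halfDeletedVerts S ⊆ Prod.fst '' (S \ deletedVerts S ×ˢ Set.univ) := fun x hx => by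
    obtain ⟨t, -, ht⟩ := mem_halfDeletedVerts.mp hx
    exact ⟨(x, !t), ⟨ht, fun h => hx (.inr h.1)⟩, rfl⟩
  rw [← Set.ncard_sdiff_add_ncard_of_subset hB, ncard_prod_univ_bool]
  exact Nat.add_le_add_right ((Set.ncard_le_ncard hA).trans Set.ncard_image_le) _


/-- `G × K₂ - S`, kept on the whole vertex set `V × Bool` with the vertices of `S` isolated. -/
abbrev timesK2Minus (G : SimpleGraph V) (S : Set (V × Bool)) : SimpleGraph (V × Bool) :=
  ((timesK2 G).induce Sᶜ).spanningCoe

lemma timesK2Minus_adj {u v : V} {s t : Bool} (huv : G.Adj u v) (hst : s ≠ t) (hu : (u, s) ∉ S)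
    (hv : (v, t) ∉ S) : (timesK2Minus G S).Adj (u, s) (v, t) :=
  spanningCoe_induce_adj.mpr ⟨⟨huv, hst⟩, hu, hv⟩

lemma exists_iff_eq_of_mem_halfDeletedVerts {x : V} (hx : x ∈ halfDeletedVerts S)
    (P : V × Bool → Prop) : ∃ c, ∀ t, (x, t) ∉ S → (P (x, t) ↔ t = c) := by
  classical
  obtain ⟨t₀, h₀, h₁⟩ := mem_halfDeletedVerts.mp hx
  refine ⟨if P (x, t₀) then t₀ else !t₀, fun t ht => ?_⟩
  obtain rfl : t = t₀ := by cases t <;> cases t₀ <;> simp_all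
  split_ifs <;> simp_all

lemma colorable_induce_of_reachable_copies {e : V × Bool} {D : Set V}
    (hsurv : ∀ v ∈ D, ∃ t, (v, t) ∉ S)
    (hdec : ∀ v ∈ D, ∃ c, ∀ t, (v, t) ∉ S →
      ((timesK2Minus G S).Reachable e (v, t) ↔ t = c))
    (hedge : ∀ a ∈ D, ∀ b ∈ D, G.Adj a b → a ∈ intactVerts S ∨ b ∈ intactVerts S) :
    (G.induce D).Colorable 2 := by
  choose! col hcol using hdec
  suffices key : ∀ a ∈ D, ∀ b ∈ D, G.Adj a b → a ∈ intactVerts S → col a ≠ col b by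
    refine colorable_two_induce_iff.mpr ⟨Coloring.mk col fun {a b} hab => ?_⟩
    obtain ⟨hab, ha, hb⟩ := spanningCoe_induce_adj.mp hab
    rcases hedge a ha b hb hab with hai | hbi
    · exact key a ha b hb hab hai
    · exact (key b hb a ha hab.symm hbi).symm
  intro a ha b hb hab hai heq
  obtain ⟨t, ht⟩ := hsurv b hb
  -- `(b, t)` and `(a, !t)` are adjacent survivors, so both or neither lie in the component of `e`.
  have hiff : t = col b ↔ (!t) = col a := by
    rw [← hcol b hb t ht, ← hcol a ha (!t) (hai _)]
    exact (timesK2Minus_adj hab.symm (by simp) ht (hai _)).reachable_iff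
  rw [heq] at hiff
  cases t <;> cases col b <;> simp at hiff


lemma reachable_false_iff_not_reachable_true {w v : V}
    (h : ¬ (timesK2Minus G S).Reachable (w, false) (w, true))
    (hv : (G.induce (intactVerts S)).spanningCoe.Reachable w v) :
    (timesK2Minus G S).Reachable (w, false) (v, false) ↔
      ¬ (timesK2Minus G S).Reachable (w, false) (v, true) := by
  set R := (timesK2Minus G S).Reachable (w, false)
  refine hv.mem_of_adj_closed (U := {v | R (v, false) ↔ ¬ R (v, true)})
    (fun a b hab ha => ?_) ⟨fun _ => h, fun _ => .rfl⟩
  obtain ⟨hab, ha', hb'⟩ := spanningCoe_induce_adj.mp hab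
  have h₁ : R (a, false) ↔ R (b, true) :=
    (timesK2Minus_adj hab (by simp) (ha' _) (hb' _)).reachable_iff
  have h₂ : R (a, true) ↔ R (b, false) :=
    (timesK2Minus_adj hab (by simp) (ha' _) (hb' _)).reachable_iff
  change R (a, false) ↔ ¬ R (a, true) at ha
  change R (b, false) ↔ ¬ R (b, true)
  tauto

lemma isBPair_of_not_reachable_copies {w : V} (hw : w ∈ intactVerts S)
    (h : ¬ (timesK2Minus G S).Reachable (w, false) (w, true)) :
    IsBPair G (halfDeletedVerts S) (deletedVerts S) := by
  classical
  set R := (timesK2Minus G S).Reachable (w, false)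
  set C := {y | (G.induce (intactVerts S)).spanningCoe.Reachable w y}
  have hCW : C ⊆ intactVerts S := fun _ hv => hv.mem_of_spanningCoe_induce hw
  have hdec : ∀ v ∈ C, ∃ c, ∀ t, (v, t) ∉ S → (R (v, t) ↔ t = c) := fun v hv =>
    ⟨decide (R (v, true)), fun t _ => by
      cases t <;> simp
      exact reachable_false_iff_not_reachable_true h hv⟩
  refine ⟨disjoint_halfDeletedVerts_deletedVerts, ?_, C, ?_, ?_, fun x hx => ?_⟩
  · rw [compl_halfDeletedVerts_union_deletedVerts]
    exact ⟨w, hw⟩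
  · rw [compl_halfDeletedVerts_union_deletedVerts]
    exact isCompOf_iff.mpr ⟨w, hw, rfl⟩
  · exact colorable_induce_of_reachable_copies (fun v hv => ⟨false, hCW hv _⟩) hdec
      fun a ha _ _ _ => .inl (hCW ha)
  · refine colorable_induce_of_reachable_copies (S := S) (e := (w, false)) ?_ ?_ ?_
    · rintro v (hv | rfl)
      · exact ⟨false, hCW hv _⟩
      · exact (mem_halfDeletedVerts.mp hx).imp fun _ h => h.1
    · rintro v (hv | rfl)
      · exact hdec v hv
      · exact exists_iff_eq_of_mem_halfDeletedVerts hx _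
    · rintro a (ha | rfl) b (hb | rfl) hab
      · exact .inl (hCW ha)
      · exact .inl (hCW ha)
      · exact .inr (hCW hb)
      · exact absurd hab (G.irrefl)

lemma not_mem_deletedVerts_union_of_mem_intactVerts {v : V} (hv : v ∈ intactVerts S)
    {Z : Set V} (hZ : Z ⊆ halfDeletedVerts S) : v ∉ deletedVerts S ∪ Z := by
  rintro (h | h)
  exacts [not_mem_deletedVerts_of_mem_intactVerts hv h, hZ h (.inl hv)]

lemma exists_reachable_of_adj
    (hcopies : ∀ w ∈ intactVerts S, ∀ t t', (timesK2Minus G S).Reachable (w, t) (w, t'))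
    {e : V × Bool} (he : e ∉ S) {u v : V} {t : Bool} (hu : (timesK2Minus G S).Reachable e (u, t))
    (hv : v ∉ deletedVerts S) (huv : G.Adj u v) (hW : u ∈ intactVerts S ∨ v ∈ intactVerts S) :
    ∃ t', (timesK2Minus G S).Reachable e (v, t') := by
  rcases hW with hu' | hv'
  · obtain ⟨t', ht'⟩ := exists_not_mem_of_not_mem_deletedVerts hv
    exact ⟨t', (hu.trans (hcopies u hu' t (!t'))).trans
      (timesK2Minus_adj huv (by simp) (hu' _) ht').reachable⟩
  · exact ⟨!t, hu.trans (timesK2Minus_adj huv (by simp)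
      (hu.mem_of_spanningCoe_induce he) (hv' _)).reachable⟩

lemma exists_isSeparating_of_not_reachable_intactVerts [Finite V]
    (hcopies : ∀ w ∈ intactVerts S, ∀ t t', (timesK2Minus G S).Reachable (w, t) (w, t'))
    {w₁ w₂ : V} (hw₁ : w₁ ∈ intactVerts S) (hw₂ : w₂ ∈ intactVerts S)
    (h : ¬ (timesK2Minus G S).Reachable (w₁, false) (w₂, false)) :
    ∃ T, IsSeparating G T ∧
      2 * T.ncard ≤ (halfDeletedVerts S).ncard + 2 * (deletedVerts S).ncard := by
  set W := intactVerts S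
  set A := halfDeletedVerts S
  set B := deletedVerts S
  set P := {v | ∃ t, (timesK2Minus G S).Reachable (w₁, false) (v, t)}
  have hP : ∀ u ∈ P, ∀ v ∉ B, G.Adj u v → u ∈ W ∨ v ∈ W → v ∈ P :=
    fun _ ⟨_, hu⟩ _ hv huv hW => exists_reachable_of_adj hcopies (hw₁ false) hu hv huv hW
  have hw₁P : w₁ ∈ P := ⟨false, .rfl⟩
  have hw₂P : w₂ ∉ P := fun ⟨t, ht⟩ => h (ht.trans (hcopies w₂ hw₂ t false))
  have hT₁ : IsSeparating G (B ∪ A ∩ P) := by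
    refine isSeparating_of_adj_closed (U := W ∩ P) (fun a b _ hb hab ⟨haW, haP⟩ => ?_)
      (not_mem_deletedVerts_union_of_mem_intactVerts hw₁ Set.inter_subset_left)
      (not_mem_deletedVerts_union_of_mem_intactVerts hw₂ Set.inter_subset_left)
      ⟨hw₁, hw₁P⟩ fun h => hw₂P h.2
    have hbB : b ∉ B := fun h => hb (.inl h)
    have hbP := hP a haP b hbB hab (.inl haW)
    rcases mem_intactVerts_or_halfDeletedVerts_or_deletedVerts (S := S) b with hbW | hbA | hbB'
    · exact ⟨hbW, hbP⟩
    · exact absurd (.inr ⟨hbA, hbP⟩) hb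
    · exact absurd hbB' hbB
  have hT₂ : IsSeparating G (B ∪ A \ P) := by
    refine isSeparating_of_adj_closed (U := P) (fun a b _ hb hab haP => ?_)
      (not_mem_deletedVerts_union_of_mem_intactVerts hw₁ Set.sdiff_subset)
      (not_mem_deletedVerts_union_of_mem_intactVerts hw₂ Set.sdiff_subset) hw₁P hw₂P
    have hbB : b ∉ B := fun h => hb (.inl h)
    rcases mem_intactVerts_or_halfDeletedVerts_or_deletedVerts (S := S) b with hbW | hbA | hbB'
    · exact hP a haP b hbB hab (.inr hbW)
    · by_contra hbP
      exact hb (.inr ⟨hbA, hbP⟩)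
    · exact absurd hbB' hbB
  have hcard : (B ∪ A ∩ P).ncard + (B ∪ A \ P).ncard ≤ A.ncard + 2 * B.ncard := by
    have h₁ := Set.ncard_union_le B (A ∩ P)
    have h₂ := Set.ncard_union_le B (A \ P)
    have h₃ := Set.ncard_inter_add_ncard_sdiff_eq_ncard A P
    omega
  rcases le_total (B ∪ A ∩ P).ncard (B ∪ A \ P).ncard with hle | hle
  · exact ⟨_, hT₁, by omega⟩
  · exact ⟨_, hT₂, by omega⟩

lemma exists_isBPair_of_reachable_intactVerts
    (hW : ∀ w ∈ intactVerts S, ∀ w' ∈ intactVerts S, ∀ t t',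
      (timesK2Minus G S).Reachable (w, t) (w', t'))
    {p q : V × Bool} (hp : p ∉ S) (hq : q ∉ S) (hpq : ¬ (timesK2Minus G S).Reachable p q) :
    ∃ x ∈ halfDeletedVerts S, IsBPair G (halfDeletedVerts S \ {x}) (deletedVerts S) := by
  obtain ⟨⟨x, t⟩, he, hsep⟩ : ∃ e ∉ S, ∀ w ∈ intactVerts S, ∀ t,
      ¬ (timesK2Minus G S).Reachable e (w, t) := by
    by_cases hpW : ∃ w ∈ intactVerts S, ∃ t, (timesK2Minus G S).Reachable p (w, t)
    · obtain ⟨w, hw, t, hpw⟩ := hpW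
      exact ⟨q, hq, fun w' hw' t' hqw' =>
        hpq (hpw.trans ((hW w hw w' hw' t t').trans hqw'.symm))⟩
    · push Not at hpW
      exact ⟨p, hp, hpW⟩
  have hxB : x ∉ deletedVerts S := fun h => he (h t)
  have hxA : x ∈ halfDeletedVerts S := by
    rcases mem_intactVerts_or_halfDeletedVerts_or_deletedVerts (S := S) x with hxW | hxA | hxB'
    · exact absurd .rfl (hsep x hxW t)
    · exact hxA
    · exact absurd hxB' hxB
  refine ⟨x, hxA, isBPair_of_forall_not_adj (v := x)
    (disjoint_halfDeletedVerts_deletedVerts.mono_left Set.sdiff_subset) (by simp [hxB])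
    fun w hw hxw => ?_⟩
  have hwx : w ≠ x := fun h => G.irrefl (h ▸ hxw)
  have hwW : w ∈ intactVerts S := by
    rcases mem_intactVerts_or_halfDeletedVerts_or_deletedVerts (S := S) w with hwW | hwA | hwB
    · exact hwW
    · exact absurd (.inl ⟨hwA, hwx⟩) hw
    · exact absurd (.inr hwB) hw
  exact hsep w hwW (!t) (timesK2Minus_adj hxw (by simp) he (hwW _)).reachable

theorem IsSeparating.exists_of_timesK2 [Finite V] [Nonempty V]
    (hS : IsSeparating (timesK2 G) S) :
    (∃ T, IsSeparating G T ∧ 2 * T.ncard ≤ S.ncard) ∨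
      ∃ X Y, IsBPair G X Y ∧ X.ncard + 2 * Y.ncard ≤ S.ncard := by
  rcases isSeparating_iff.mp hS with hsub | ⟨p, hp, q, hq, hpq⟩
  · obtain ⟨v⟩ := ‹Nonempty V›
    refine .inr ⟨{v}ᶜ, ∅, isBPair_compl_singleton v, ?_⟩
    have h₁ := Set.ncard_add_ncard_compl S
    have h₂ := Set.ncard_add_ncard_compl {v}
    have h₃ := Set.ncard_le_one_iff_subsingleton.mpr hsub
    simp only [Nat.card_prod, Nat.card_eq_fintype_card, Fintype.card_bool,
      Set.ncard_singleton, Set.ncard_empty] at h₁ h₂ ⊢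
    omega
  have hcount := ncard_halfDeletedVerts_add_le (S := S)
  by_cases hA : ∃ w ∈ intactVerts S, ¬ (timesK2Minus G S).Reachable (w, false) (w, true)
  · obtain ⟨w, hw, h⟩ := hA
    exact .inr ⟨_, _, isBPair_of_not_reachable_copies hw h, hcount⟩
  push Not at hA
  have hcopies : ∀ w ∈ intactVerts S, ∀ t t', (timesK2Minus G S).Reachable (w, t) (w, t') :=
    fun w hw t t' => by
      cases t <;> cases t'
      exacts [.rfl, hA w hw, (hA w hw).symm, .rfl]
  by_cases hB : ∃ w₁ ∈ intactVerts S, ∃ w₂ ∈ intactVerts S,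
      ¬ (timesK2Minus G S).Reachable (w₁, false) (w₂, false)
  · obtain ⟨w₁, hw₁, w₂, hw₂, h⟩ := hB
    obtain ⟨T, hT, hcard⟩ :=
      exists_isSeparating_of_not_reachable_intactVerts hcopies hw₁ hw₂ h
    exact .inl ⟨T, hT, hcard.trans hcount⟩
  push Not at hB
  obtain ⟨x, -, hbp⟩ := exists_isBPair_of_reachable_intactVerts (fun w hw w' hw' t t' =>
    ((hcopies w hw t false).trans (hB w hw w' hw')).trans (hcopies w' hw' false t')) hp hq hpq
  refine .inr ⟨_, _, hbp, le_trans ?_ hcount⟩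
  have := Set.ncard_sdiff_singleton_le (halfDeletedVerts S) x
  omega

end

/-- Main theorem: `κ(G × K₂) = min{2κ(G), b(G)}`. -/
theorem stmt_10 {V : Type u} [Fintype V] [Nonempty V] (G : SimpleGraph V) :
    kappa (timesK2 G) = min (2 * kappa G) (bInv G) := by
  refine le_antisymm (le_min ?_ ?_) (le_kappa fun S hS => ?_)
  · obtain ⟨T, hT, hκ⟩ := exists_isSeparating_ncard_eq_kappa G
    exact hκ ▸ ncard_prod_univ_bool T ▸ kappa_le hT.prod_univ
  · obtain ⟨X, Y, hXY, hb⟩ := exists_isBPair_ncard_eq_bInv G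
    obtain ⟨S, hS, hcard⟩ := hXY.exists_isSeparating_timesK2
    exact hb ▸ (kappa_le hS).trans hcard
  · rcases hS.exists_of_timesK2 with ⟨T, hT, hcard⟩ | ⟨X, Y, hXY, hcard⟩
    · exact (min_le_left _ _).trans ((Nat.mul_le_mul_left 2 (kappa_le hT)).trans hcard)
    · exact (min_le_right _ _).trans ((bInv_le hXY).trans hcard)
end

section
/- Let G be connected non-bipartite, and let S ⊆ V(G × K₂) satisfy |S| < min{2κ(G), b(G)} and S'_u := ({u} × {a,b}) − S ≠ ∅ for every u ∈ V(G). Then for each w ∈ V(G), the set S'_w is contained in the vertex set of a single connected component of G × K₂ − S (i.e., when |S'_w| = 2, its two vertices lie in the same component). -/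
open SimpleGraph

universe u v

/-!
Suppose the two lifts `(w, a)` and `(w, b)` of `w` lie in different components of
`G × K₂ − S`, and let `A` be the component of `(w, a)`. Put `X = {u | S'_u ≠ {u} × {a,b}}`, so
`|X| ≤ |S|`, and let `D` be the component of `w` in `G − X`. Along every edge of `G − X` the
lift of one end lying in `A` determines that of the other end, with the `K₂`-coordinate
flipped; since exactly one lift of `w` lies in `A`, the same holds on all of `D`, and
colouring `u ∈ D` by its lift in `A` is a proper 2-colouring of `G[D]`. A vertex `x ∈ X` keeps
a lift `(x, i) ∉ S`, and all neighbours of `x` in `D` see `(x, i)` through their lift with the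
other coordinate, so they share one colour and `G[D ∪ {x}]` is bipartite too. Hence `(X, ∅)`
is a b-pair and `b(G) ≤ |X| ≤ |S|`.
-/

namespace SimpleGraph

variable {V : Type u} {G : SimpleGraph V}

@[simp]
theorem timesK2_adj {p q : V × Bool} : (timesK2 G).Adj p q ↔ G.Adj p.1 q.1 ∧ p.2 ≠ q.2 := by
  simp [timesK2, tensor]

theorem Reachable.induction_on_adj {P : V → Prop} (hP : ∀ u v, G.Adj u v → P u → P v) {u v : V}
    (huv : G.Reachable u v) (hu : P u) : P v := by
  rw [reachable_iff_reflTransGen] at huv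
  induction huv with
  | refl => exact hu
  | tail _ hab ih => exact hP _ _ hab ih

theorem colorable_two_induce_of_adj_ne {s : Set V} (c : V → Bool)
    (hc : ∀ u ∈ s, ∀ v ∈ s, G.Adj u v → c u ≠ c v) : (G.induce s).Colorable 2 := by
  simpa using (Coloring.mk (fun a : s => c a) fun {a b} h => hc a a.2 b b.2 h).colorable

theorem colorable_two_induce_union_singleton {s : Set V} (c : V → Bool)
    (hc : ∀ u ∈ s, ∀ v ∈ s, G.Adj u v → c u ≠ c v) {x : V} {b : Bool}
    (hx : ∀ u ∈ s, G.Adj x u → c u ≠ b) : (G.induce (s ∪ {x})).Colorable 2 := by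
  classical
  refine colorable_two_induce_of_adj_ne (Function.update c x b) fun u hu v hv huv => ?_
  by_cases hux : u = x <;> by_cases hvx : v = x
  · exact absurd (hux.trans hvx.symm) huv.ne
  · subst hux
    simpa [hvx] using (hx v (hv.resolve_right hvx) huv).symm
  · subst hvx
    simpa [hux] using hx u (hu.resolve_right hux) huv.symm
  · simpa [hux, hvx] using hc u (hu.resolve_right hux) v (hv.resolve_right hvx) huv

theorem mem_image_supp_iff_of_adj {α : Type v} {H : SimpleGraph α} {s : Set α}
    (K : (H.induce s).ConnectedComponent) {p q : α} (hp : p ∈ s) (hq : q ∈ s) (hpq : H.Adj p q) :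
    p ∈ (↑) '' K.supp ↔ q ∈ (↑) '' K.supp := by
  have hK : (H.induce s).connectedComponentMk ⟨p, hp⟩ =
      (H.induce s).connectedComponentMk ⟨q, hq⟩ :=
    ConnectedComponent.connectedComponentMk_eq_of_adj hpq
  simp [ConnectedComponent.mem_supp_iff, hp, hq, hK]

theorem bInv_le_of_isBPair {X Y : Set V} (h : IsBPair G X Y) : bInv G ≤ X.ncard + 2 * Y.ncard :=
  Nat.sInf_le ⟨X, Y, h, rfl⟩

end SimpleGraph

open SimpleGraph

section Lifts

variable {V : Type u} {G : SimpleGraph V} {S A : Set (V × Bool)}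

theorem forall_lift_mem_iff_of_adj
    (hA : ∀ p q, p ∈ Sᶜ → q ∈ Sᶜ → (timesK2 G).Adj p q → (p ∈ A ↔ q ∈ A)) {u v : V} {b : Bool}
    (hu : ∀ j, (u, j) ∉ S) (hv : ∀ j, (v, j) ∉ S) (huv : G.Adj u v)
    (hb : ∀ j, (u, j) ∈ A ↔ j = b) : ∀ j, (v, j) ∈ A ↔ j = !b := by
  intro j
  rw [← hA _ _ (hu !j) (hv j) (by simp [huv]), hb, Bool.not_eq_eq_eq_not]

theorem exists_forall_lift_mem_iff_of_reachable
    (hA : ∀ p q, p ∈ Sᶜ → q ∈ Sᶜ → (timesK2 G).Adj p q → (p ∈ A ↔ q ∈ A)) {s : Set V}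
    (hs : ∀ u ∈ s, ∀ j, (u, j) ∉ S) {a d : s} (had : (G.induce s).Reachable a d)
    (ha : ∃ b, ∀ j, ((a : V), j) ∈ A ↔ j = b) : ∃ b, ∀ j, ((d : V), j) ∈ A ↔ j = b :=
  had.induction_on_adj (P := fun u : s => ∃ b, ∀ j, ((u : V), j) ∈ A ↔ j = b)
    (fun u v huv ⟨b, hb⟩ =>
      ⟨!b, forall_lift_mem_iff_of_adj hA (hs u u.2) (hs v v.2) huv hb⟩) ha

theorem exists_forall_mem_image_supp_lift_mem_iff
    (hA : ∀ p q, p ∈ Sᶜ → q ∈ Sᶜ → (timesK2 G).Adj p q → (p ∈ A ↔ q ∈ A)) {s : Set V}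
    (hs : ∀ u ∈ s, ∀ j, (u, j) ∉ S) {a : s} (ha : ∃ b, ∀ j, ((a : V), j) ∈ A ↔ j = b) :
    ∃ c : V → Bool, ∀ u ∈ (↑) '' ((G.induce s).connectedComponentMk a).supp,
      ∀ j, (u, j) ∈ A ↔ j = c u := by
  classical
  refine ⟨fun u => decide ((u, true) ∈ A), ?_⟩
  rintro _ ⟨u, hu, rfl⟩
  obtain ⟨b, hb⟩ :=
    exists_forall_lift_mem_iff_of_reachable hA hs (ConnectedComponent.exact hu).symm ha
  simp [hb]

theorem ne_of_adj_of_lift_mem_iff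
    (hA : ∀ p q, p ∈ Sᶜ → q ∈ Sᶜ → (timesK2 G).Adj p q → (p ∈ A ↔ q ∈ A)) {u v : V}
    {i bu bv : Bool} (hu : (u, i) ∉ S) (hv : (v, !i) ∉ S) (huv : G.Adj u v)
    (hbu : (u, i) ∈ A ↔ i = bu) (hbv : (v, !i) ∈ A ↔ (!i) = bv) : bu ≠ bv := by
  rintro rfl
  have h := (hbu.symm.trans (hA _ _ hu hv (by simp [huv]))).trans hbv
  cases i <;> cases bu <;> simp at h

end Lifts

theorem isBPair_image_fst_of_not_reachable {V : Type u} {G : SimpleGraph V}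
    {S : Set (V × Bool)} (hne : ∀ u : V, ∃ x : Bool, (u, x) ∉ S) {w : V}
    (h0 : (w, false) ∉ S) (h1 : (w, true) ∉ S)
    (hsep : ¬ ((timesK2 G).induce Sᶜ).Reachable ⟨(w, false), h0⟩ ⟨(w, true), h1⟩) :
    IsBPair G (Prod.fst '' S) ∅ := by
  classical
  set X := Prod.fst '' S
  have hXc : ∀ u ∈ Xᶜ, ∀ j, (u, j) ∉ S := fun u hu j h => hu ⟨_, h, rfl⟩
  have hw : w ∈ Xᶜ := by
    rintro ⟨⟨_, j⟩, hj, rfl⟩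
    cases j
    exacts [h0 hj, h1 hj]
  set A : Set (V × Bool) :=
    (↑) '' (((timesK2 G).induce Sᶜ).connectedComponentMk ⟨(w, false), h0⟩).supp
  have hA : ∀ p q, p ∈ Sᶜ → q ∈ Sᶜ → (timesK2 G).Adj p q → (p ∈ A ↔ q ∈ A) :=
    fun _ _ => mem_image_supp_iff_of_adj _
  have hAw : ∀ j, (w, j) ∈ A ↔ j = false := by
    rintro (_ | _)
    · simp [A, h0]
    · simpa [A, h1] using fun h => hsep (ConnectedComponent.exact h).symm
  set D : Set V := (↑) '' ((G.induce Xᶜ).connectedComponentMk ⟨w, hw⟩).supp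
  have hDX : ∀ u ∈ D, u ∈ Xᶜ := by
    rintro _ ⟨u, _, rfl⟩
    exact u.2
  obtain ⟨c, hcD⟩ :=
    exists_forall_mem_image_supp_lift_mem_iff hA hXc (a := ⟨w, hw⟩) ⟨false, hAw⟩
  have hc : ∀ u ∈ D, ∀ v ∈ D, G.Adj u v → c u ≠ c v := fun u hu v hv huv =>
    ne_of_adj_of_lift_mem_iff hA (hXc u (hDX u hu) true) (hXc v (hDX v hv) false) huv
      (hcD u hu true) (hcD v hv false)
  rw [IsBPair, Set.union_empty]
  refine ⟨Set.disjoint_empty _, ⟨w, hw⟩, D, ⟨_, rfl⟩, colorable_two_induce_of_adj_ne c hc,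
    fun x _ => ?_⟩
  obtain ⟨i, hi⟩ := hne x
  -- colour `x` so that its lift `(x, i)` obeys the rule `hcD` of the lifts over `D`
  have hxb : (x, i) ∈ A ↔ i = if (x, i) ∈ A then i else !i := by split_ifs <;> simpa
  exact colorable_two_induce_union_singleton c hc fun u hu hxu =>
    (ne_of_adj_of_lift_mem_iff hA hi (hXc u (hDX u hu) !i) hxu hxb (hcD u hu _)).symm

theorem stmt_13_general {V : Type u} [Fintype V] (G : SimpleGraph V) (S : Set (V × Bool))
    (hsize : S.ncard < min (2 * kappa G) (bInv G))
    (hne : ∀ u : V, ∃ x : Bool, (u, x) ∉ S) :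
    ∀ p q : (Sᶜ : Set (V × Bool)), (p : V × Bool).1 = (q : V × Bool).1 →
      ((timesK2 G).induce Sᶜ).Reachable p q := by
  have hsep : ∀ w h0 h1, ((timesK2 G).induce Sᶜ).Reachable ⟨(w, false), h0⟩ ⟨(w, true), h1⟩ :=
    fun w h0 h1 => by_contra fun hsep => (hsize.trans_le (min_le_right _ _)).not_ge <|
      calc bInv G ≤ (Prod.fst '' S).ncard + 2 * (∅ : Set V).ncard :=
            bInv_le_of_isBPair (isBPair_image_fst_of_not_reachable hne h0 h1 hsep)
        _ ≤ S.ncard := by simpa using Set.ncard_image_le S.toFinite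
  rintro ⟨⟨w, _ | _⟩, hp⟩ ⟨⟨_, _ | _⟩, hq⟩ (rfl : w = _)
  exacts [.rfl, hsep w hp hq, (hsep w hq hp).symm, .rfl]

/-- Under the same hypotheses, each class `S'_w` lies inside a single connected
component of `G × K₂ − S`. -/
theorem stmt_13 {V : Type u} [Fintype V] (G : SimpleGraph V)
    (hconn : G.Connected) (hnbip : ¬ G.Colorable 2) (S : Set (V × Bool))
    (hsize : S.ncard < min (2 * kappa G) (bInv G))
    (hne : ∀ u : V, ∃ x : Bool, (u, x) ∉ S) :
    ∀ p q : (Sᶜ : Set (V × Bool)), (p : V × Bool).1 = (q : V × Bool).1 →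
      ((timesK2 G).induce Sᶜ).Reachable p q :=
  stmt_13_general G S hsize hne
end
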